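/- arXiv:1211.4135 — 3 statements merged into one kernel-verified Lean document; each statement's English description precedes it below -/
import Mathlib

section
/- Let R be an integral domain, M a torsion-free R-module, and S a nontrivial commutative R-algebra which is flat as an R-module. Then the canonical R-linear map M → S ⊗_R M sending x to 1 ⊗ x is injective. -/
/-! For `x ≠ 0` in a torsion-free module, `r ↦ r • x` embeds `R` into `M`. Tensoring this embedding
with the flat module `S` keeps it injective, and it becomes `s ↦ s ⊗ x`; hence `1 ⊗ x ≠ 0`. -/

open TensorProduct

theorem LinearMap.toSpanSingleton_injective_of_ne_zero {R M : Type*} [Ring R]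
    [AddCommGroup M] [Module R M] (hM : ∀ (r : R) (x : M), r • x = 0 → r = 0 ∨ x = 0)
    {x : M} (hx : x ≠ 0) : Function.Injective (LinearMap.toSpanSingleton R M x) :=
  (injective_iff_map_eq_zero _).mpr fun r hr => (hM r x hr).resolve_right hx

theorem TensorProduct.tmul_left_injective_of_flat {R N M : Type*} [CommRing R]
    [AddCommGroup N] [Module R N] [Module.Flat R N] [AddCommGroup M] [Module R M] {x : M}
    (hx : Function.Injective (LinearMap.toSpanSingleton R M x)) :
    Function.Injective (fun n : N => n ⊗ₜ[R] x) := by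
  have hcomp : (fun n : N => n ⊗ₜ[R] x) =
      (LinearMap.lTensor N (LinearMap.toSpanSingleton R M x)) ∘ (TensorProduct.rid R N).symm := by
    funext n
    simp
  rw [hcomp]
  exact (Module.Flat.lTensor_preserves_injective_linearMap _ hx).comp
    (TensorProduct.rid R N).symm.injective

theorem injective_one_tmul_of_torsionFree_general
    (R : Type*) [CommRing R]
    (M : Type*) [AddCommGroup M] [Module R M]
    (S : Type*) [CommRing S] [Algebra R S] [Nontrivial S] [Module.Flat R S]
    (hM : ∀ (r : R) (x : M), r • x = 0 → r = 0 ∨ x = 0) :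
    Function.Injective (fun x : M => (1 : S) ⊗ₜ[R] x) := by
  refine (injective_iff_map_eq_zero (TensorProduct.mk R S M 1)).mpr fun x hx => ?_
  by_contra hx0
  have hinj := tmul_left_injective_of_flat (N := S)
    (LinearMap.toSpanSingleton_injective_of_ne_zero hM hx0)
  exact one_ne_zero (hinj (hx.trans (zero_tmul S x).symm))

/-- The module-theoretic core of Lemma 4: if `R` is an integral domain, `M` a
torsion-free `R`-module and `S` a nontrivial flat commutative `R`-algebra, the
canonical map `M → S ⊗[R] M`, `x ↦ 1 ⊗ x`, is injective. -/
theorem injective_one_tmul_of_torsionFree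
    (R : Type*) [CommRing R] [IsDomain R]
    (M : Type*) [AddCommGroup M] [Module R M]
    (S : Type*) [CommRing S] [Algebra R S] [Nontrivial S] [Module.Flat R S]
    (hM : ∀ (r : R) (x : M), r • x = 0 → r = 0 ∨ x = 0) :
    Function.Injective (fun x : M => (1 : S) ⊗ₜ[R] x) :=
  injective_one_tmul_of_torsionFree_general R M S hM
end

section
/- Let R be a Dedekind domain and (M_i)_{i∈I} an arbitrary family of flat R-modules. Then the product module ∏_{i∈I} M_i is a flat R-module. -/
/-- Affine content of Corollary 9: over a Dedekind domain, an arbitrary product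
of flat modules is flat. -/
theorem flat_pi_of_flat_dedekind
    (R : Type*) [CommRing R] [IsDedekindDomain R]
    (I : Type*) (M : I → Type*) [∀ i, AddCommGroup (M i)] [∀ i, Module R (M i)]
    [∀ i, Module.Flat R (M i)] :
    Module.Flat R (∀ i, M i) := by
  have torsionFree_factor (i : I) : Module.IsTorsionFree R (M i) := Module.Flat.isTorsionFree
  have torsionFree_pi : Module.IsTorsionFree R (∀ i, M i) := inferInstance
  -- Over a Dedekind domain flat means torsion-free: the localizations at maximal ideals are
  -- DVRs, hence Bézout, and finitely generated ideals of a Bézout domain are free.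
  rw [IsDedekindDomain.flat_iff_torsion_eq_bot, ← Submodule.isTorsionFree_iff_torsion_eq_bot]
  exact torsionFree_pi
end

section
/- Let R be a commutative ring, F and N two R-modules, I an index set, and f : ⨁_{i∈I} F → N an R-linear map from the direct sum of I-many copies of F. Then there exist a subset J ⊆ I whose cardinality is at most the cardinality of the set Hom_R(F, N) of R-linear maps from F to N, and a submodule T of ⨁_{i∈I} F contained in the kernel of f, such that T is a direct complement of the canonical submodule ⨁_{j∈J} F (the sum of the coordinate copies indexed by J) inside ⨁_{i∈I} F, and T is isomorphic as an R-module to ⨁_{i∈I∖J} F. -/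
/-!
Call `i, j ∈ I` equivalent when `f` restricts to the same map `F → N` on the `i`-th and `j`-th
copies of `F`, and let `r : I → I` send each index to a chosen representative of its class;
the set `J` of representatives has at most `|Hom(F, N)|` elements. Reindexing along `r` is an
idempotent endomorphism `π` of `⨁_I F` with image `⨁_J F` and `f ∘ π = f`, so `T = ker π` lies
in `ker f` and complements `⨁_J F`. Since `⨁_{I ∖ J} F` complements `⨁_J F` as well, both are
isomorphic to the quotient by `⨁_J F`, hence to each other.
-/

universe u

open Cardinal Set

theorem Function.exists_fiber_representatives {α β : Type u} (φ : α → β) :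
    ∃ r : α → α, (∀ a, φ (r a) = φ a) ∧ (∀ a, r (r a) = r a) ∧ #(range r) ≤ #β := by
  refine ⟨rangeSplitting φ ∘ rangeFactorization φ, fun a => apply_rangeSplitting φ _,
    fun a => ?_, ?_⟩
  · exact congrArg (rangeSplitting φ) (Subtype.ext (apply_rangeSplitting φ _))
  · calc #(range (rangeSplitting φ ∘ rangeFactorization φ))
        ≤ #(range (rangeSplitting φ)) := mk_le_mk_of_subset (range_comp_subset_range _ _)
      _ ≤ #(range φ) := mk_range_le
      _ ≤ #β := mk_set_le _

namespace Finsupp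

variable {R M N α : Type*} [Semiring R] [AddCommMonoid M] [Module R M] [AddCommMonoid N]
  [Module R N]

theorem isCompl_supported_compl (s : Set α) :
    IsCompl (supported M R s) (supported M R sᶜ) :=
  ⟨disjoint_supported_supported isCompl_compl.disjoint,
    codisjoint_supported_supported isCompl_compl.codisjoint⟩

theorem range_lmapDomain_eq_supported (r : α → α) :
    LinearMap.range (lmapDomain M R r) = supported M R (range r) := by
  rw [LinearMap.range_eq_map, ← supported_univ, lmapDomain_supported, image_univ]

theorem isIdempotentElem_lmapDomain {r : α → α} (hr : ∀ a, r (r a) = r a) :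
    IsIdempotentElem (lmapDomain M R r) := by
  rw [IsIdempotentElem, Module.End.mul_eq_comp, ← lmapDomain_comp]
  exact congrArg (lmapDomain M R) (funext hr)

theorem ker_lmapDomain_le_ker {r : α → α} {f : (α →₀ M) →ₗ[R] N}
    (hf : ∀ a, f ∘ₗ lsingle (r a) = f ∘ₗ lsingle a) :
    LinearMap.ker (lmapDomain M R r) ≤ LinearMap.ker f := by
  have hcomp : f ∘ₗ lmapDomain M R r = f := lhom_ext' fun a => by
    rw [← hf a]
    ext v
    simp
  exact hcomp ▸ LinearMap.ker_le_ker_comp _ f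

end Finsupp

/-- Module-theoretic content of Lemma 13: given `f : ⨁_{i ∈ I} F → N`, there is
a subset `J ⊆ I` with `|J| ≤ |Hom(F, N)|` and a submodule `T ⊆ ker f` which is a
direct complement of the canonical submodule `⨁_{j ∈ J} F` inside `⨁_{i ∈ I} F`
and is isomorphic to `⨁_{i ∈ I ∖ J} F`.  (Here the direct sum of copies of `F`
indexed by `I` is realized as the finitely supported functions `I →₀ F`, and the
canonical submodule of sections supported on `J` is `Finsupp.supported F R J`.) -/
theorem exists_nice_kernel_summand
    (R : Type u) [CommRing R]
    (F : Type u) [AddCommGroup F] [Module R F]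
    (N : Type u) [AddCommGroup N] [Module R N]
    (I : Type u) (f : (I →₀ F) →ₗ[R] N) :
    ∃ (J : Set I) (T : Submodule R (I →₀ F)),
      Cardinal.mk J ≤ Cardinal.mk (F →ₗ[R] N) ∧
      T ≤ LinearMap.ker f ∧
      T ⊓ Finsupp.supported F R J = ⊥ ∧
      T ⊔ Finsupp.supported F R J = ⊤ ∧
      Nonempty (T ≃ₗ[R] ((↥(Jᶜ)) →₀ F)) := by
  obtain ⟨r, hfr, hrr, hcard⟩ :=
    Function.exists_fiber_representatives fun i => f ∘ₗ Finsupp.lsingle i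
  have hcompl := LinearMap.IsIdempotentElem.isCompl
    (Finsupp.isIdempotentElem_lmapDomain (M := F) (R := R) hrr)
  rw [Finsupp.range_lmapDomain_eq_supported] at hcompl
  refine ⟨range r, _, hcard, Finsupp.ker_lmapDomain_le_ker hfr, hcompl.symm.inf_eq_bot,
    hcompl.symm.sup_eq_top, ⟨?_⟩⟩
  exact (Submodule.quotientEquivOfIsCompl _ _ hcompl).symm ≪≫ₗ
    Submodule.quotientEquivOfIsCompl _ _ (Finsupp.isCompl_supported_compl _) ≪≫ₗ
    Finsupp.supportedEquivFinsupp _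
end
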